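/- Let η be a real random variable whose law is symmetric (η and −η have the same distribution) with finite variance σ². Then for any real c ≤ 1 and any event of the form {c·η ≤ 1} with c ≥ 0, E[(1 + c·η + c²·η²)·1{c·η ≤ 1}] ≤ 1 + c²·σ², and consequently E[e^{c·η}·1{c·η ≤ 1}] ≤ exp(c²·σ²). -/

import Mathlib

/-!
On `{c η ≤ 1}` we have `0 ≤ e^{c η} ≤ 1 + c η + (c η)²`, and the quadratic is nonnegative
everywhere, so both truncated integrals are bounded by the full expectation
`1 + E[c η] + c² E[η²]`. Symmetry makes `E[η] = 0`, so this is `1 + c² σ² ≤ exp (c² σ²)`.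
-/

open MeasureTheory ProbabilityTheory

lemma Real.exp_le_one_add_add_sq {t : ℝ} (ht : t ≤ 1) : Real.exp t ≤ 1 + t + t ^ 2 := by
  rcases le_or_gt (-1) t with h | h
  · have := (abs_le.1 (Real.abs_exp_sub_one_sub_id_le (abs_le.2 ⟨h, ht⟩))).2
    linarith
  · nlinarith [Real.exp_le_one_iff.2 (by linarith : t ≤ 0)]

section

variable {Ω : Type*} [MeasurableSpace Ω] {μ : Measure Ω}

theorem integral_eq_zero_of_map_eq_map_neg {E : Type*} [NormedAddCommGroup E] [NormedSpace ℝ E]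
    [MeasurableSpace E] [BorelSpace E] {X : Ω → E} (hX : AEMeasurable X μ)
    (hsymm : μ.map X = μ.map (fun ω => -X ω)) : ∫ ω, X ω ∂μ = 0 := by
  have hident : IdentDistrib X (fun ω => -X ω) μ μ := ⟨hX, hX.neg, hsymm⟩
  have h := hident.integral_eq
  rw [integral_neg, eq_neg_iff_add_eq_zero, ← two_smul ℝ, smul_eq_zero] at h
  exact h.resolve_left two_ne_zero

variable {Y : Ω → ℝ}

lemma integrable_one_add_add_sq [IsFiniteMeasure μ] (hY : MemLp Y 2 μ) :
    Integrable (fun ω => 1 + Y ω + Y ω ^ 2) μ :=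
  ((integrable_const 1).add (hY.integrable one_le_two)).add hY.integrable_sq

lemma integral_one_add_add_sq [IsProbabilityMeasure μ] (hY : MemLp Y 2 μ) (hmean : μ[Y] = 0) :
    ∫ ω, (1 + Y ω + Y ω ^ 2) ∂μ = 1 + variance Y μ := by
  have hYi : Integrable Y μ := hY.integrable one_le_two
  rw [integral_add (f := fun ω => 1 + Y ω) ((integrable_const 1).add hYi) hY.integrable_sq,
    integral_add (integrable_const 1) hYi, integral_const, hmean,
    variance_of_integral_eq_zero hY.aestronglyMeasurable.aemeasurable hmean]
  simp

lemma setIntegral_one_add_add_sq_le [IsProbabilityMeasure μ] (hY : MemLp Y 2 μ)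
    (hmean : μ[Y] = 0) (s : Set Ω) :
    ∫ ω in s, (1 + Y ω + Y ω ^ 2) ∂μ ≤ 1 + variance Y μ := by
  rw [← integral_one_add_add_sq hY hmean]
  refine setIntegral_le_integral (integrable_one_add_add_sq hY) (ae_of_all _ fun ω => ?_)
  show 0 ≤ 1 + Y ω + Y ω ^ 2
  nlinarith [sq_nonneg (2 * Y ω + 1)]

lemma setIntegral_exp_le_setIntegral_one_add_add_sq [IsFiniteMeasure μ] (hY : MemLp Y 2 μ) :
    ∫ ω in {ω | Y ω ≤ 1}, Real.exp (Y ω) ∂μ ≤ ∫ ω in {ω | Y ω ≤ 1}, (1 + Y ω + Y ω ^ 2) ∂μ := by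
  have hs : NullMeasurableSet {ω | Y ω ≤ 1} μ :=
    hY.aestronglyMeasurable.aemeasurable.nullMeasurable measurableSet_Iic
  refine integral_mono_of_nonneg (ae_of_all _ fun ω => (Real.exp_pos _).le) ?_ ?_
  · exact (integrable_one_add_add_sq hY).restrict
  · filter_upwards [ae_restrict_mem₀ hs] with ω hω using Real.exp_le_one_add_add_sq hω

end

theorem truncated_exp_moment_symmetric_general
    {Ω : Type*} [MeasurableSpace Ω] (μ : Measure Ω) [IsProbabilityMeasure μ]
    (η : Ω → ℝ)
    (hsymm : Measure.map η μ = Measure.map (fun ω => -η ω) μ)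
    (hL2 : MemLp η 2 μ)
    (σ2 : ℝ) (hσ2 : variance η μ = σ2)
    (c : ℝ) :
    (∫ ω in {ω | c * η ω ≤ 1}, (1 + c * η ω + c ^ 2 * (η ω) ^ 2) ∂μ
        ≤ 1 + c ^ 2 * σ2) ∧
    (∫ ω in {ω | c * η ω ≤ 1}, Real.exp (c * η ω) ∂μ
        ≤ Real.exp (c ^ 2 * σ2)) := by
  have hY : MemLp (fun ω => c * η ω) 2 μ := hL2.const_mul c
  have hmean : ∫ ω, c * η ω ∂μ = 0 := by
    rw [integral_const_mul,
      integral_eq_zero_of_map_eq_map_neg hL2.aestronglyMeasurable.aemeasurable hsymm, mul_zero]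
  have hvar : variance (fun ω => c * η ω) μ = c ^ 2 * σ2 := by rw [variance_const_mul, hσ2]
  simp_rw [← mul_pow]
  have hquad := (setIntegral_one_add_add_sq_le hY hmean {ω | c * η ω ≤ 1}).trans_eq (by rw [hvar])
  refine ⟨hquad, ?_⟩
  calc ∫ ω in {ω | c * η ω ≤ 1}, Real.exp (c * η ω) ∂μ
      ≤ ∫ ω in {ω | c * η ω ≤ 1}, (1 + c * η ω + (c * η ω) ^ 2) ∂μ :=
        setIntegral_exp_le_setIntegral_one_add_add_sq hY
    _ ≤ 1 + c ^ 2 * σ2 := hquad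
    _ ≤ Real.exp (c ^ 2 * σ2) := by linarith [Real.add_one_le_exp (c ^ 2 * σ2)]

theorem truncated_exp_moment_symmetric
    {Ω : Type*} [MeasurableSpace Ω] (μ : Measure Ω) [IsProbabilityMeasure μ]
    (η : Ω → ℝ) (hη : Measurable η)
    (hsymm : Measure.map η μ = Measure.map (fun ω => -η ω) μ)
    (hL2 : MemLp η 2 μ)
    (σ2 : ℝ) (hσ2 : variance η μ = σ2)
    (c : ℝ) (hc1 : c ≤ 1) (hc0 : 0 ≤ c) :
    (∫ ω in {ω | c * η ω ≤ 1}, (1 + c * η ω + c ^ 2 * (η ω) ^ 2) ∂μ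
        ≤ 1 + c ^ 2 * σ2) ∧
    (∫ ω in {ω | c * η ω ≤ 1}, Real.exp (c * η ω) ∂μ
        ≤ Real.exp (c ^ 2 * σ2)) :=
  truncated_exp_moment_symmetric_general μ η hsymm hL2 σ2 hσ2 c
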